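/- arXiv:2505.11791 — 2 statements merged into one kernel-verified Lean document; each statement's English description precedes it below -/
import Mathlib

section
/- Corollary 3 (price-of-anarchy sensitivity under multiplicative perturbations): given any γ ∈ ℝ_{≥0}^{E×[m]}, assume 𝒜^NE(G(γ), T(γ̃)) is nonempty for the relevant γ̃ and min_{a'∈𝒜} L(a';γ) > 0. Then there exists δ > 0 such that for every γ̃ ∈ ℝ_{≥0}^{E×[m]} satisfying |γ̃_{e,j} − γ_{e,j}| ≤ δ·γ_{e,j} for each e ∈ E and j ∈ {1,…,m}, PoA(G(γ), T(γ̃)) ≤ PoA(G(γ), T(γ)). -/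
open Finset

namespace CG

variable {n m : ℕ} {E : Type} [Fintype E] [DecidableEq E]

/-- `load a e` is the number of agents using resource `e` under allocation `a`. -/
def load (a : Fin n → Finset E) (e : E) : ℕ :=
  (Finset.univ.filter fun i => e ∈ a i).card

/-- the cost `ℓ_e(k; γ) = Σ_j γ_{e,j} b_j(k)` of resource `e` at load `k`. -/
def resCost (b : Fin m → ℕ → ℝ) (γ : E → Fin m → ℝ) (e : E) (k : ℕ) : ℝ :=
  ∑ j, γ e j * b j k

/-- the toll `τ_e(k; γ̃) = Σ_j γ̃_{e,j} τ_j⋆(k)` on resource `e` at load `k`. -/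
def resToll (τs : Fin m → ℕ → ℝ) (γt : E → Fin m → ℝ) (e : E) (k : ℕ) : ℝ :=
  ∑ j, γt e j * τs j k

/-- agent `i`'s cost `J_i(a; γ, γ̃)` at allocation `a`. -/
def agentCost (b τs : Fin m → ℕ → ℝ) (γ γt : E → Fin m → ℝ)
    (a : Fin n → Finset E) (i : Fin n) : ℝ :=
  ∑ e ∈ a i, (resCost b γ e (load a e) + resToll τs γt e (load a e))

/-- `a` is a pure Nash equilibrium of the tolled congestion game `(G(γ), T(γ̃))`. -/
def IsNash (A : Fin n → Finset (Finset E)) (b τs : Fin m → ℕ → ℝ)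
    (γ γt : E → Fin m → ℝ) (a : Fin n → Finset E) : Prop :=
  (∀ i, a i ∈ A i) ∧
    ∀ i : Fin n, ∀ ai' ∈ A i,
      agentCost b τs γ γt a i ≤ agentCost b τs γ γt (Function.update a i ai') i

/-- the system cost `L(a; γ) = Σ_e |a|_e ℓ_e(|a|_e; γ)`. -/
def sysCost (b : Fin m → ℕ → ℝ) (γ : E → Fin m → ℝ) (a : Fin n → Finset E) : ℝ :=
  ∑ e, (load a e : ℝ) * resCost b γ e (load a e)

/-- the price of anarchy `PoA(G(γ), T(γ̃))`. -/
noncomputable def PoA (A : Fin n → Finset (Finset E)) (b τs : Fin m → ℕ → ℝ)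
    (γ γt : E → Fin m → ℝ) : ℝ :=
  sSup (sysCost b γ '' {a | IsNash A b τs γ γt a}) /
    sInf (sysCost b γ '' {a : Fin n → Finset E | ∀ i, a i ∈ A i})

/-- `x_e`: number of agents using `e` under both `a` and `a'`. -/
def labelX (a a' : Fin n → Finset E) (e : E) : ℕ :=
  (Finset.univ.filter fun i => e ∈ a i ∧ e ∈ a' i).card

/-- `y_e`: number of agents using `e` under `a` but not `a'`. -/
def labelY (a a' : Fin n → Finset E) (e : E) : ℕ :=
  (Finset.univ.filter fun i => e ∈ a i ∧ e ∉ a' i).card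

/-- `z_e`: number of agents using `e` under `a'` but not `a`. -/
def labelZ (a a' : Fin n → Finset E) (e : E) : ℕ :=
  (Finset.univ.filter fun i => e ∉ a i ∧ e ∈ a' i).card

/-- `θ(x,y,z,j) = Σ_{e : (x_e,y_e,z_e) = (x,y,z)} γ_{e,j}`. -/
def labelSum (γ : E → Fin m → ℝ) (a a' : Fin n → Finset E) (x y z : ℕ) (j : Fin m) : ℝ :=
  ∑ e ∈ Finset.univ.filter
      (fun e => labelX a a' e = x ∧ labelY a a' e = y ∧ labelZ a a' e = z),
    γ e j

/-- sum of `f` over the index set `I = {(x,y,z,j) : 1 ≤ x+y+z ≤ n}`. -/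
def sumI (n : ℕ) (f : ℕ → ℕ → ℕ → Fin m → ℝ) : ℝ :=
  ∑ x ∈ Finset.range (n + 1), ∑ y ∈ Finset.range (n + 1), ∑ z ∈ Finset.range (n + 1),
    ∑ j : Fin m, if 1 ≤ x + y + z ∧ x + y + z ≤ n then f x y z j else 0

/-- feasibility for the robust-PoA linear program at misspecification level `δ`. -/
def Feasible (n : ℕ) (b τs : Fin m → ℕ → ℝ) (δ : ℝ)
    (θ θh : ℕ → ℕ → ℕ → Fin m → ℝ) : Prop :=
  (∀ x y z j, 0 ≤ θ x y z j) ∧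
  (∀ x y z j, 0 ≤ θh x y z j) ∧
  sumI n (fun x y z j => (x + y : ℝ) * b j (x + y) * θ x y z j) = 1 ∧
  sumI n (fun x y z j =>
      ((y : ℝ) * b j (x + y) - (z : ℝ) * b j (x + y + 1)) * θ x y z j
        + ((y : ℝ) * τs j (x + y) - (z : ℝ) * τs j (x + y + 1)) * θh x y z j) ≤ 0 ∧
  (∀ x y z j, (1 - δ) * θ x y z j ≤ θh x y z j ∧ θh x y z j ≤ (1 + δ) * θ x y z j)

/-- `p⋆(δ)`: value of the robust-PoA linear program. -/
noncomputable def pstar (n : ℕ) (m : ℕ) (b τs : Fin m → ℕ → ℝ) (δ : ℝ) : ℝ :=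
  sInf { r : ℝ | ∃ θ θh : ℕ → ℕ → ℕ → Fin m → ℝ, Feasible n b τs δ θ θh ∧
    r = sumI n (fun x y z j => (x + z : ℝ) * b j (x + z) * θ x y z j) }

end CG

/-!
Only the tolls depend on `γ̃`, and the agent costs depend continuously on it. An allocation that
is not an equilibrium for `γ̃ = γ` has a strictly profitable deviation, which stays strictly
profitable for `γ̃` near `γ`; as there are finitely many allocations and deviations, a small
enough relative perturbation creates no new equilibria. The worst equilibrium cost can then only
decrease, while the optimal cost does not involve `γ̃` at all.
-/

open Filter Topology

theorem Filter.Eventually.exists_forall_abs_sub_le_mul {ι κ : Type*} [Fintype ι] [Fintype κ]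
    {γ : ι → κ → ℝ} {p : (ι → κ → ℝ) → Prop} (h : ∀ᶠ x in 𝓝 γ, p x) :
    ∃ δ > (0 : ℝ), ∀ x, (∀ i k, |x i k - γ i k| ≤ δ * γ i k) → p x := by
  obtain ⟨ε, hε, hp⟩ := Metric.eventually_nhds_iff.1 h
  have hγ₁ : 0 < ‖γ‖ + 1 := by positivity
  refine ⟨ε / (‖γ‖ + 1), by positivity, fun x hx => hp ?_⟩
  have hbound : ‖x - γ‖ ≤ ε / (‖γ‖ + 1) * ‖γ‖ := by
    refine (pi_norm_le_iff_of_nonneg (by positivity)).2 fun i =>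
      (pi_norm_le_iff_of_nonneg (by positivity)).2 fun k => ?_
    calc ‖(x - γ) i k‖ = |x i k - γ i k| := Real.norm_eq_abs _
      _ ≤ ε / (‖γ‖ + 1) * γ i k := hx i k
      _ ≤ ε / (‖γ‖ + 1) * ‖γ‖ := by
        gcongr
        exact (Real.le_norm_self _).trans ((norm_le_pi_norm (γ i) k).trans (norm_le_pi_norm γ i))
  calc dist x γ = ‖x - γ‖ := dist_eq_norm x γ
    _ ≤ ε / (‖γ‖ + 1) * ‖γ‖ := hbound
    _ < ε / (‖γ‖ + 1) * (‖γ‖ + 1) := by gcongr; linarith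
    _ = ε := div_mul_cancel₀ ε hγ₁.ne'

namespace CG

theorem continuous_agentCost_toll {n m : ℕ} {E : Type} [DecidableEq E]
    (b τs : Fin m → ℕ → ℝ) (γ : E → Fin m → ℝ) (a : Fin n → Finset E) (i : Fin n) :
    Continuous fun γt => agentCost b τs γ γt a i := by
  unfold agentCost resToll
  fun_prop

variable {n m : ℕ} {E : Type} [Fintype E] [DecidableEq E]

theorem eventually_isNash_imp_isNash (A : Fin n → Finset (Finset E)) (b τs : Fin m → ℕ → ℝ)
    (γ γt₀ : E → Fin m → ℝ) :
    ∀ᶠ γt in 𝓝 γt₀, ∀ a, IsNash A b τs γ γt a → IsNash A b τs γ γt₀ a := by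
  have hdev : ∀ᶠ γt in 𝓝 γt₀, ∀ (a : Fin n → Finset E) (i : Fin n) (ai' : Finset E),
      agentCost b τs γ γt₀ a i ≤ agentCost b τs γ γt₀ (Function.update a i ai') i ∨
        agentCost b τs γ γt (Function.update a i ai') i < agentCost b τs γ γt a i := by
    simp only [eventually_all]
    intro a i ai'
    rcases le_or_gt (agentCost b τs γ γt₀ a i)
        (agentCost b τs γ γt₀ (Function.update a i ai') i) with hle | hlt
    · exact .of_forall fun _ => .inl hle
    · exact ((continuous_agentCost_toll b τs γ _ i).tendsto γt₀).eventually_lt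
        ((continuous_agentCost_toll b τs γ a i).tendsto γt₀) hlt |>.mono fun _ => .inr
  filter_upwards [hdev] with γt hγt a ⟨haA, hstable⟩
  refine ⟨haA, fun i ai' hai' => (hγt a i ai').resolve_right ?_⟩
  exact not_lt.2 (hstable i ai' hai')

theorem PoA_le_PoA_of_isNash_subset (A : Fin n → Finset (Finset E)) (b τs : Fin m → ℕ → ℝ)
    (γ γt₁ γt₂ : E → Fin m → ℝ)
    (hsub : {a | IsNash A b τs γ γt₁ a} ⊆ {a | IsNash A b τs γ γt₂ a})
    (hNE : {a | IsNash A b τs γ γt₁ a}.Nonempty)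
    (hmin : 0 ≤ sInf (sysCost b γ '' {a : Fin n → Finset E | ∀ i, a i ∈ A i})) :
    PoA A b τs γ γt₁ ≤ PoA A b τs γ γt₂ :=
  div_le_div_of_nonneg_right
    (csSup_le_csSup ((Set.toFinite _).image _).bddAbove (hNE.image _) (Set.image_mono hsub)) hmin

end CG

theorem poa_sensitivity_multiplicative_general
    {n m : ℕ} {E : Type} [Fintype E] [DecidableEq E]
    (A : Fin n → Finset (Finset E))
    (b τs : Fin m → ℕ → ℝ)
    (γ : E → Fin m → ℝ)
    (hmin : 0 < sInf (CG.sysCost b γ '' {a : Fin n → Finset E | ∀ i, a i ∈ A i})) :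
    ∃ δ > (0 : ℝ), ∀ γt : E → Fin m → ℝ,
      (∀ e j, 0 ≤ γt e j) → (∀ e j, |γt e j - γ e j| ≤ δ * γ e j) →
      {a : Fin n → Finset E | CG.IsNash A b τs γ γt a}.Nonempty →
      CG.PoA A b τs γ γt ≤ CG.PoA A b τs γ γ := by
  obtain ⟨δ, hδ, hnash⟩ :=
    (CG.eventually_isNash_imp_isNash A b τs γ γ).exists_forall_abs_sub_le_mul
  exact ⟨δ, hδ, fun γt _ hclose hNE =>
    CG.PoA_le_PoA_of_isNash_subset A b τs γ γt γ (hnash γt hclose) hNE hmin.le⟩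

/-- Corollary 3: price-of-anarchy sensitivity under multiplicative
perturbations: for all sufficiently small relative misspecifications `γ̃` of `γ`
(with a nonempty equilibrium set), `PoA(G(γ), T(γ̃)) ≤ PoA(G(γ), T(γ))`. -/
theorem poa_sensitivity_multiplicative
    {n m : ℕ} {E : Type} [Fintype E] [DecidableEq E]
    (A : Fin n → Finset (Finset E)) (hA : ∀ i, (A i).Nonempty)
    (b τs : Fin m → ℕ → ℝ)
    (hb_nonneg : ∀ j k, 0 ≤ b j k) (hb_mono : ∀ j, Monotone (b j))
    (γ : E → Fin m → ℝ) (hγ : ∀ e j, 0 ≤ γ e j)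
    (hNE : {a : Fin n → Finset E | CG.IsNash A b τs γ γ a}.Nonempty)
    (hmin : 0 < sInf (CG.sysCost b γ '' {a : Fin n → Finset E | ∀ i, a i ∈ A i})) :
    ∃ δ > (0 : ℝ), ∀ γt : E → Fin m → ℝ,
      (∀ e j, 0 ≤ γt e j) → (∀ e j, |γt e j - γ e j| ≤ δ * γ e j) →
      {a : Fin n → Finset E | CG.IsNash A b τs γ γt a}.Nonempty →
      CG.PoA A b τs γ γt ≤ CG.PoA A b τs γ γ :=
  poa_sensitivity_multiplicative_general A b τs γ hmin
end

section
/- Feasibility of the normalized label variables for the robust-PoA linear program: let δ ≥ 0, let γ, γ̃ ∈ ℝ_{≥0}^{E×[m]} satisfy |γ̃_{e,j} − γ_{e,j}| ≤ δ·γ_{e,j} for all e, j, let a^NE be a pure Nash equilibrium of (G(γ), T(γ̃)) with L(a^NE; γ) > 0, and let a' ∈ 𝒜 be any allocation. Define labels (x_e, y_e, z_e) of each resource e with respect to the pair (a^NE, a'), and set θ̄(x,y,z,j) := (Σ_{e : (x_e,y_e,z_e)=(x,y,z)} γ_{e,j}) / L(a^NE;γ) and θ̂̄(x,y,z,j) :=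 (Σ_{e : (x_e,y_e,z_e)=(x,y,z)} γ̃_{e,j}) / L(a^NE;γ). Then (θ̄, θ̂̄) satisfies: (i) Σ_{(x,y,z,j)∈I} (x+y)·b_j(x+y)·θ̄(x,y,z,j) = 1; (ii) Σ_{(x,y,z,j)∈I} [y·b_j(x+y) − z·b_j(x+y+1)]·θ̄(x,y,z,j) + [y·τ_j⋆(x+y) − z·τ_j⋆(x+y+1)]·θ̂̄(x,y,z,j) ≤ 0; (iii) (1−δ)·θ̄ ≤ θ̂̄ ≤ (1+δ)·θ̄ componentwise; and the LP objective evaluated at θ̄ equals Σ_{(x,y,z,j)∈I} (x+z)·b_j(x+z)·θ̄(x,y,z,j) = L(a'; γ)/L(a^NE; γ). -/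
open Finset

/-!
Normalizing by `L(a^NE; γ) > 0` only divides every sum by a positive constant, so all claims
concern the label sums `θ`. For a coefficient `c` with `c(0,0,0,·) = 0`, the sum of `c · θ`
over `I` regroups resource by resource into `Σ_e Σ_j c(x_e, y_e, z_e, j) γ_{e,j}`. Since
`x_e + y_e = |a^NE|_e` and `x_e + z_e = |a'|_e`, this turns the normalization row into
`L(a^NE; γ)` and the objective into `L(a'; γ)`. The Nash row becomes
`Σ_e (y_e C_e(|a^NE|_e) - z_e C_e(|a^NE|_e + 1))` for the tolled cost `C_e`, which is
`Σ_i J_i(a^NE) - Σ_i J_i(a'_i, a^NE_{-i}) ≤ 0`. The sandwich on `θ̂` is the bound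
`|γ̃ - γ| ≤ δ γ` summed over each fibre.
-/

namespace CG

open Function

variable {n m : ℕ} {E : Type} [DecidableEq E]

def indexTriples (n : ℕ) : Finset (ℕ × ℕ × ℕ) :=
  (range (n + 1) ×ˢ range (n + 1) ×ˢ range (n + 1)).filter
    fun t => 1 ≤ t.1 + t.2.1 + t.2.2 ∧ t.1 + t.2.1 + t.2.2 ≤ n

lemma sumI_eq_sum_indexTriples (f : ℕ → ℕ → ℕ → Fin m → ℝ) :
    sumI n f = ∑ t ∈ indexTriples n, ∑ j, f t.1 t.2.1 t.2.2 j := by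
  simp only [sumI, indexTriples, sum_filter, sum_product, sum_ite_irrel, sum_const_zero]

lemma sumI_add (f g : ℕ → ℕ → ℕ → Fin m → ℝ) :
    sumI n (fun x y z j => f x y z j + g x y z j) = sumI n f + sumI n g := by
  simp only [sumI_eq_sum_indexTriples, sum_add_distrib]

lemma sumI_div (f : ℕ → ℕ → ℕ → Fin m → ℝ) (L : ℝ) :
    sumI n (fun x y z j => f x y z j / L) = sumI n f / L := by
  simp only [sumI_eq_sum_indexTriples, sum_div]

section Labels

variable (a a' : Fin n → Finset E) (e : E)

def label : ℕ × ℕ × ℕ := (labelX a a' e, labelY a a' e, labelZ a a' e)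

lemma labelX_add_labelY : labelX a a' e + labelY a a' e = load a e := by
  rw [labelX, labelY, load, ← filter_filter, ← filter_filter,
    card_filter_add_card_filter_not]

lemma labelX_add_labelZ : labelX a a' e + labelZ a a' e = load a' e := by
  rw [labelX, labelZ, load, ← filter_filter, ← filter_filter, filter_comm,
    filter_comm (fun i => e ∉ a i),
    card_filter_add_card_filter_not]

lemma labelX_add_labelY_add_labelZ_le : labelX a a' e + labelY a a' e + labelZ a a' e ≤ n := by
  rw [labelX_add_labelY, load, labelZ, ← card_union_of_disjoint]
  · exact (card_le_univ _).trans_eq (Fintype.card_fin n)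
  · exact disjoint_filter.2 fun i _ hi hi' => hi'.1 hi

lemma label_mem_indexTriples_or_eq_zero :
    label a a' e ∈ indexTriples n ∨ label a a' e = 0 := by
  have := labelX_add_labelY_add_labelZ_le a a' e
  by_cases h : label a a' e = 0
  · exact .inr h
  · left
    simp only [label, Prod.ext_iff, Prod.fst_zero, Prod.snd_zero] at h
    simp only [indexTriples, label, mem_filter, mem_product, mem_range]
    omega

lemma load_update_of_mem (i : Fin n) {s : Finset E} (he : e ∈ s) :
    load (update a i s) e = if e ∈ a i then load a e else load a e + 1 := by
  have hfilter :
      univ.filter (fun k => e ∈ update a i s k) = insert i (univ.filter fun k => e ∈ a k) := by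
    ext k
    rcases eq_or_ne k i with rfl | hk <;> simp [*]
  rw [load, load, hfilter]
  split_ifs with h
  · rw [insert_eq_of_mem (by simpa)]
  · rw [card_insert_of_notMem (by simpa)]

end Labels

variable [Fintype E]

lemma labelSum_eq_sum_label (γ : E → Fin m → ℝ) (a a' : Fin n → Finset E)
    (x y z : ℕ) (j : Fin m) :
    labelSum γ a a' x y z j = ∑ e with label a a' e = (x, y, z), γ e j := by
  simp only [labelSum, label, Prod.mk.injEq]

/-- Resources with label `(0,0,0)` lie in no fibre over `I`, hence the hypothesis on `c`. -/
lemma sumI_mul_labelSum (c : ℕ → ℕ → ℕ → Fin m → ℝ) (hc : ∀ j, c 0 0 0 j = 0)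
    (γ : E → Fin m → ℝ) (a a' : Fin n → Finset E) :
    sumI n (fun x y z j => c x y z j * labelSum γ a a' x y z j)
      = ∑ e, ∑ j, c (labelX a a' e) (labelY a a' e) (labelZ a a' e) j * γ e j := by
  set g : ℕ × ℕ × ℕ → E → ℝ := fun t e => ∑ j, c t.1 t.2.1 t.2.2 j * γ e j
  have hg : ∀ e, label a a' e ∉ indexTriples n → g (label a a' e) e = 0 := fun e he => by
    simp [g, (label_mem_indexTriples_or_eq_zero a a' e).resolve_left he, hc]
  calc sumI n (fun x y z j => c x y z j * labelSum γ a a' x y z j)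
      = ∑ t ∈ indexTriples n, ∑ e with label a a' e = t, g (label a a' e) e := by
        simp only [sumI_eq_sum_indexTriples, labelSum_eq_sum_label, mul_sum, g]
        refine sum_congr rfl fun t _ => (sum_comm).trans (sum_congr rfl fun e he => ?_)
        rw [(mem_filter.1 he).2]
    _ = ∑ e with label a a' e ∈ indexTriples n, g (label a a' e) e :=
        sum_fiberwise_eq_sum_filter _ _ _ _
    _ = ∑ e, g (label a a' e) e := sum_filter_of_ne fun e _ => not_imp_comm.1 (hg e)

lemma labelSum_nonneg {γ : E → Fin m → ℝ} (hγ : ∀ e j, 0 ≤ γ e j) (a a' : Fin n → Finset E)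
    (x y z : ℕ) (j : Fin m) : 0 ≤ labelSum γ a a' x y z j :=
  sum_nonneg fun e _ => hγ e j

lemma labelSum_mono {γ γ' : E → Fin m → ℝ} (h : ∀ e j, γ e j ≤ γ' e j) (a a' : Fin n → Finset E)
    (x y z : ℕ) (j : Fin m) : labelSum γ a a' x y z j ≤ labelSum γ' a a' x y z j :=
  sum_le_sum fun e _ => h e j

lemma labelSum_const_mul (c : ℝ) (γ : E → Fin m → ℝ) (a a' : Fin n → Finset E)
    (x y z : ℕ) (j : Fin m) :
    labelSum (fun e j => c * γ e j) a a' x y z j = c * labelSum γ a a' x y z j :=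
  (mul_sum ..).symm

lemma sumI_labelSum_eq_sysCost (b : Fin m → ℕ → ℝ) (γ : E → Fin m → ℝ)
    (a a' : Fin n → Finset E) :
    sumI n (fun x y z j => (x + y : ℝ) * b j (x + y) * labelSum γ a a' x y z j)
      = sysCost b γ a := by
  rw [sumI_mul_labelSum _ (by simp)]
  refine sum_congr rfl fun e _ => ?_
  rw [resCost, mul_sum, ← labelX_add_labelY a a' e]
  push_cast
  exact sum_congr rfl fun j _ => by ring

lemma sumI_labelSum_eq_sysCost_deviation (b : Fin m → ℕ → ℝ) (γ : E → Fin m → ℝ)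
    (a a' : Fin n → Finset E) :
    sumI n (fun x y z j => (x + z : ℝ) * b j (x + z) * labelSum γ a a' x y z j)
      = sysCost b γ a' := by
  rw [sumI_mul_labelSum _ (by simp)]
  refine sum_congr rfl fun e _ => ?_
  rw [resCost, mul_sum, ← labelX_add_labelZ a a' e]
  push_cast
  exact sum_congr rfl fun j _ => by ring

section Deviation

variable (a a' : Fin n → Finset E)

lemma sum_sum_mem_eq_sum_load (f : E → ℝ) : ∑ i, ∑ e ∈ a i, f e = ∑ e, load a e * f e := by
  rw [sum_comm' (t' := univ) (s' := fun e => univ.filter fun i => e ∈ a i) (by simp)]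
  simp only [sum_const, nsmul_eq_mul, load]

/-- Unilateral deviations to `a'`: agent `i` finds on `e ∈ a' i` the load `|a|_e` if it already
used `e`, and `|a|_e + 1` otherwise. -/
lemma sum_sum_mem_update (f : E → ℕ → ℝ) :
    ∑ i, ∑ e ∈ a' i, f e (load (update a i (a' i)) e)
      = ∑ e, (labelX a a' e * f e (load a e) + labelZ a a' e * f e (load a e + 1)) := by
  calc ∑ i, ∑ e ∈ a' i, f e (load (update a i (a' i)) e)
      = ∑ i, ∑ e ∈ a' i, if e ∈ a i then f e (load a e) else f e (load a e + 1) :=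
        sum_congr rfl fun i _ => sum_congr rfl fun e he => by
          rw [load_update_of_mem a e i he, apply_ite (f e)]
    _ = ∑ e, ∑ i with e ∈ a' i, if e ∈ a i then f e (load a e) else f e (load a e + 1) :=
        sum_comm' (by simp)
    _ = _ := by
        simp only [sum_ite, sum_const, nsmul_eq_mul, filter_filter, labelX, labelZ, and_comm]

end Deviation

def tolledCost (b τs : Fin m → ℕ → ℝ) (γ γt : E → Fin m → ℝ) (e : E) (k : ℕ) : ℝ :=
  resCost b γ e k + resToll τs γt e k

lemma sumI_labelSum_eq_sum_tolledCost (b τs : Fin m → ℕ → ℝ) (γ γt : E → Fin m → ℝ)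
    (a a' : Fin n → Finset E) :
    sumI n (fun x y z j =>
        ((y : ℝ) * b j (x + y) - (z : ℝ) * b j (x + y + 1)) * labelSum γ a a' x y z j
          + ((y : ℝ) * τs j (x + y) - (z : ℝ) * τs j (x + y + 1)) * labelSum γt a a' x y z j)
      = ∑ e, (labelY a a' e * tolledCost b τs γ γt e (load a e)
          - labelZ a a' e * tolledCost b τs γ γt e (load a e + 1)) := by
  rw [sumI_add, sumI_mul_labelSum _ (by simp), sumI_mul_labelSum _ (by simp),
    ← sum_add_distrib]
  refine sum_congr rfl fun e _ => ?_
  simp only [tolledCost, resCost, resToll, ← labelX_add_labelY a a' e, mul_add, mul_sum,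
    ← sum_add_distrib, ← sum_sub_distrib]
  exact sum_congr rfl fun j _ => by ring

lemma IsNash.sum_labelY_sub_labelZ_nonpos {A : Fin n → Finset (Finset E)} {b τs : Fin m → ℕ → ℝ}
    {γ γt : E → Fin m → ℝ} {a a' : Fin n → Finset E} (ha : IsNash A b τs γ γt a)
    (ha' : ∀ i, a' i ∈ A i) :
    ∑ e, (labelY a a' e * tolledCost b τs γ γt e (load a e)
      - labelZ a a' e * tolledCost b τs γ γt e (load a e + 1)) ≤ 0 := by
  have hsum : ∑ i, ∑ e ∈ a i, tolledCost b τs γ γt e (load a e)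
      ≤ ∑ i, ∑ e ∈ a' i, tolledCost b τs γ γt e (load (update a i (a' i)) e) :=
    sum_le_sum fun i _ => by
      have hi := ha.2 i (a' i) (ha' i)
      rwa [agentCost, agentCost, update_self] at hi
  rw [sum_sum_mem_eq_sum_load a fun e => tolledCost b τs γ γt e (load a e),
    sum_sum_mem_update a a' (tolledCost b τs γ γt)] at hsum
  calc ∑ e, (labelY a a' e * tolledCost b τs γ γt e (load a e)
        - labelZ a a' e * tolledCost b τs γ γt e (load a e + 1))
      = ∑ e, load a e * tolledCost b τs γ γt e (load a e)
          - ∑ e, (labelX a a' e * tolledCost b τs γ γt e (load a e)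
            + labelZ a a' e * tolledCost b τs γ γt e (load a e + 1)) := by
        rw [← sum_sub_distrib]
        refine sum_congr rfl fun e _ => ?_
        rw [← labelX_add_labelY a a' e]
        push_cast
        ring
    _ ≤ 0 := sub_nonpos.2 hsum

end CG

theorem normalized_label_variables_feasible_general
    {n m : ℕ} {E : Type} [Fintype E] [DecidableEq E]
    (A : Fin n → Finset (Finset E))
    (b τs : Fin m → ℕ → ℝ)
    (δ : ℝ)
    (γ γt : E → Fin m → ℝ) (hγ : ∀ e j, 0 ≤ γ e j) (hγt : ∀ e j, 0 ≤ γt e j)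
    (herr : ∀ e j, |γt e j - γ e j| ≤ δ * γ e j)
    (a : Fin n → Finset E) (ha : CG.IsNash A b τs γ γt a)
    (hL : 0 < CG.sysCost b γ a)
    (a' : Fin n → Finset E) (ha' : ∀ i, a' i ∈ A i) :
    CG.Feasible n b τs δ
        (fun x y z j => CG.labelSum γ a a' x y z j / CG.sysCost b γ a)
        (fun x y z j => CG.labelSum γt a a' x y z j / CG.sysCost b γ a) ∧
      CG.sumI n (fun x y z j => (x + z : ℝ) * b j (x + z) *
          (CG.labelSum γ a a' x y z j / CG.sysCost b γ a)) =
        CG.sysCost b γ a' / CG.sysCost b γ a := by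
  have hlower x y z j : (1 - δ) * CG.labelSum γ a a' x y z j ≤ CG.labelSum γt a a' x y z j := by
    rw [← CG.labelSum_const_mul]
    exact CG.labelSum_mono (fun e j => by linarith [(abs_le.1 (herr e j)).1]) ..
  have hupper x y z j : CG.labelSum γt a a' x y z j ≤ (1 + δ) * CG.labelSum γ a a' x y z j := by
    rw [← CG.labelSum_const_mul]
    exact CG.labelSum_mono (fun e j => by linarith [(abs_le.1 (herr e j)).2]) ..
  simp_rw [CG.Feasible, ← mul_div_assoc, ← add_div]
  refine ⟨⟨fun x y z j => div_nonneg (CG.labelSum_nonneg hγ ..) hL.le,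
    fun x y z j => div_nonneg (CG.labelSum_nonneg hγt ..) hL.le, ?_, ?_,
    fun x y z j => ⟨div_le_div_of_nonneg_right (hlower x y z j) hL.le,
      div_le_div_of_nonneg_right (hupper x y z j) hL.le⟩⟩, ?_⟩
  · rw [CG.sumI_div, CG.sumI_labelSum_eq_sysCost, div_self hL.ne']
  · rw [CG.sumI_div, CG.sumI_labelSum_eq_sum_tolledCost]
    exact div_nonpos_of_nonpos_of_nonneg (ha.sum_labelY_sub_labelZ_nonpos ha') hL.le
  · rw [CG.sumI_div, CG.sumI_labelSum_eq_sysCost_deviation]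

/-- feasibility of the normalized label variables
`θ̄ = θ / L(a^NE; γ)`, `θ̂̄ = θ̃ / L(a^NE; γ)` for the robust-PoA linear program,
together with the identity that the LP objective at `θ̄` equals `L(a'; γ)/L(a^NE; γ)`. -/
theorem normalized_label_variables_feasible
    {n m : ℕ} {E : Type} [Fintype E] [DecidableEq E]
    (A : Fin n → Finset (Finset E)) (hA : ∀ i, (A i).Nonempty)
    (b τs : Fin m → ℕ → ℝ)
    (hb_nonneg : ∀ j k, 0 ≤ b j k) (hb_mono : ∀ j, Monotone (b j))
    (hb0 : ∀ j, b j 0 = 0) (hτ0 : ∀ j, τs j 0 = 0)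
    (δ : ℝ) (hδ : 0 ≤ δ)
    (γ γt : E → Fin m → ℝ) (hγ : ∀ e j, 0 ≤ γ e j) (hγt : ∀ e j, 0 ≤ γt e j)
    (herr : ∀ e j, |γt e j - γ e j| ≤ δ * γ e j)
    (a : Fin n → Finset E) (ha : CG.IsNash A b τs γ γt a)
    (hL : 0 < CG.sysCost b γ a)
    (a' : Fin n → Finset E) (ha' : ∀ i, a' i ∈ A i) :
    CG.Feasible n b τs δ
        (fun x y z j => CG.labelSum γ a a' x y z j / CG.sysCost b γ a)
        (fun x y z j => CG.labelSum γt a a' x y z j / CG.sysCost b γ a) ∧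
      CG.sumI n (fun x y z j => (x + z : ℝ) * b j (x + z) *
          (CG.labelSum γ a a' x y z j / CG.sysCost b γ a)) =
        CG.sysCost b γ a' / CG.sysCost b γ a :=
  normalized_label_variables_feasible_general A b τs δ γ γt hγ hγt herr a ha hL a' ha'
end
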